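/- arXiv:2308.16904 — 3 statements merged into one kernel-verified Lean document; each statement's English description precedes it below -/
import Mathlib

section
/- Let A, E ∈ ℝ^{m×n}, let Ã := A + E with i-th row ã_i and let e_i denote the i-th row of E. Let x_LS ∈ ℝ^n, b := A x_LS, ε ∈ ℝ^m, and b̃ := b + ε. Fix an index i with ã_i ≠ 0 and, for x ∈ ℝ^n, set x' := x − ((⟨ã_i, x⟩ − b̃_i)/‖ã_i‖²) ã_i. Then ‖x' − x_LS‖² = ‖x − x_LS‖² − ⟨ã_i, x − x_LS⟩²/‖ã_i‖² + (⟨e_i, x_LS⟩ − ε_i)²/‖ã_i‖². -/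
open Matrix
open scoped RealInnerProductSpace

/-!
Since `b = A x_LS`, the right-hand side `b̃ᵢ` equals `⟨ãᵢ, x_LS⟩ - (⟨eᵢ, x_LS⟩ - εᵢ)`. Measured from
`x_LS`, the step therefore removes from `x - x_LS` its component along `ãᵢ` and adds the multiple
`(⟨eᵢ, x_LS⟩ - εᵢ) / ‖ãᵢ‖²` of `ãᵢ`; Pythagoras along `ãᵢ` yields the three terms.
-/

/-- The `i`-th row of a matrix, viewed as a vector in Euclidean space. -/
noncomputable def row {m n : ℕ} (M : Matrix (Fin m) (Fin n) ℝ) (i : Fin m) :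
    EuclideanSpace ℝ (Fin n) :=
  (WithLp.equiv 2 (Fin n → ℝ)).symm (M i)

/-- Matrix-vector multiplication as a map between Euclidean spaces. -/
noncomputable def mulVecE {m n : ℕ} (M : Matrix (Fin m) (Fin n) ℝ)
    (x : EuclideanSpace ℝ (Fin n)) : EuclideanSpace ℝ (Fin m) :=
  Matrix.toEuclideanLin M x

/-- The Kaczmarz update of `x` for the system `M y = c`, using row `i`:
`x ↦ x - ((⟨mᵢ, x⟩ - cᵢ)/‖mᵢ‖²) mᵢ`. -/
noncomputable def kaczmarz {m n : ℕ} (M : Matrix (Fin m) (Fin n) ℝ) (c : Fin m → ℝ) (i : Fin m)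
    (x : EuclideanSpace ℝ (Fin n)) : EuclideanSpace ℝ (Fin n) :=
  x - ((⟪_root_.row M i, x⟫ - c i) / ‖_root_.row M i‖ ^ 2) • _root_.row M i

/-- Iterated Kaczmarz updates along the index sequence `is = (i₁, …, i_k)`,
applying row `i₁` first: `K_{i_k}(⋯ K_{i₁}(x₀) ⋯)`. -/
noncomputable def kaczmarzIter {m n k : ℕ} (M : Matrix (Fin m) (Fin n) ℝ) (c : Fin m → ℝ)
    (is : Fin k → Fin m) (x0 : EuclideanSpace ℝ (Fin n)) : EuclideanSpace ℝ (Fin n) :=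
  (List.ofFn is).foldl (fun x i => kaczmarz M c i x) x0

/-- The squared Frobenius norm `‖M‖_F² = Σ_{i,j} M_{ij}²`. -/
noncomputable def frobSq {m n : ℕ} (M : Matrix (Fin m) (Fin n) ℝ) : ℝ :=
  ∑ i, ∑ j, (M i j) ^ 2

/-- The row space `range(Mᵀ)` of a matrix, as a submodule of Euclidean space. -/
noncomputable def rowSpace {m n : ℕ} (M : Matrix (Fin m) (Fin n) ℝ) :
    Submodule ℝ (EuclideanSpace ℝ (Fin n)) :=
  LinearMap.range (Matrix.toEuclideanLin Mᵀ)

/-- The spectral norm (operator 2-norm) of a matrix. -/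
noncomputable def specNorm {m n : ℕ} (M : Matrix (Fin m) (Fin n) ℝ) : ℝ :=
  ‖LinearMap.toContinuousLinearMap (Matrix.toEuclideanLin M)‖

section InnerProductSpace

variable {F : Type*} [NormedAddCommGroup F] [InnerProductSpace ℝ F]

theorem norm_sub_inner_add_div_smul_sq (v a : F) (r : ℝ) :
    ‖v - ((⟪a, v⟫ + r) / ‖a‖ ^ 2) • a‖ ^ 2
      = ‖v‖ ^ 2 - ⟪a, v⟫ ^ 2 / ‖a‖ ^ 2 + r ^ 2 / ‖a‖ ^ 2 := by
  -- for `a = 0` both sides are `‖v‖²`, since `x / 0 = 0`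
  rcases eq_or_ne a 0 with rfl | ha
  · simp
  have hnorm : ‖a‖ ^ 2 ≠ 0 := by positivity
  rw [norm_sub_sq_real, inner_smul_right, norm_smul, mul_pow, Real.norm_eq_abs, sq_abs,
    real_inner_comm]
  field_simp
  ring

end InnerProductSpace

theorem row_add {m n : ℕ} (M N : Matrix (Fin m) (Fin n) ℝ) (i : Fin m) :
    _root_.row (M + N) i = _root_.row M i + _root_.row N i :=
  rfl

theorem mulVecE_apply {m n : ℕ} (M : Matrix (Fin m) (Fin n) ℝ) (x : EuclideanSpace ℝ (Fin n))
    (i : Fin m) : mulVecE M x i = ⟪_root_.row M i, x⟫ := by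
  simp [mulVecE, _root_.row, Matrix.toLpLin_apply, Matrix.mulVec, dotProduct,
    PiLp.inner_apply, mul_comm]

theorem kaczmarz_sub {m n : ℕ} (M : Matrix (Fin m) (Fin n) ℝ) (c : Fin m → ℝ) (i : Fin m)
    (x y : EuclideanSpace ℝ (Fin n)) :
    kaczmarz M c i x - y
      = (x - y) - ((⟪_root_.row M i, x - y⟫ + (⟪_root_.row M i, y⟫ - c i))
          / ‖_root_.row M i‖ ^ 2) • _root_.row M i := by
  rw [kaczmarz, inner_sub_right, sub_add_sub_cancel, sub_right_comm]

theorem kaczmarz_step_error_decomposition_general {m n : ℕ}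
    (A E : Matrix (Fin m) (Fin n) ℝ)
    (xLS : EuclideanSpace ℝ (Fin n)) (ε : EuclideanSpace ℝ (Fin m))
    (i : Fin m)
    (x : EuclideanSpace ℝ (Fin n)) :
    ‖kaczmarz (A + E) (fun j => mulVecE A xLS j + ε j) i x - xLS‖ ^ 2
      = ‖x - xLS‖ ^ 2
        - ⟪_root_.row (A + E) i, x - xLS⟫ ^ 2 / ‖_root_.row (A + E) i‖ ^ 2
        + (⟪_root_.row E i, xLS⟫ - ε i) ^ 2 / ‖_root_.row (A + E) i‖ ^ 2 := by
  have hresidual : ⟪_root_.row (A + E) i, xLS⟫ - (mulVecE A xLS i + ε i)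
      = ⟪_root_.row E i, xLS⟫ - ε i := by
    rw [mulVecE_apply, row_add, inner_add_left]
    ring
  rw [kaczmarz_sub, hresidual, norm_sub_inner_add_div_smul_sq]

/-- One-step orthogonal error decomposition for the Kaczmarz update on the
doubly-noisy system `Ãx ≈ b̃`, where `Ã = A + E`, `b = A x_LS`, `b̃ = b + ε`. -/
theorem kaczmarz_step_error_decomposition {m n : ℕ}
    (A E : Matrix (Fin m) (Fin n) ℝ)
    (xLS : EuclideanSpace ℝ (Fin n)) (ε : EuclideanSpace ℝ (Fin m))
    (i : Fin m) (hrow : _root_.row (A + E) i ≠ 0)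
    (x : EuclideanSpace ℝ (Fin n)) :
    ‖kaczmarz (A + E) (fun j => mulVecE A xLS j + ε j) i x - xLS‖ ^ 2
      = ‖x - xLS‖ ^ 2
        - ⟪_root_.row (A + E) i, x - xLS⟫ ^ 2 / ‖_root_.row (A + E) i‖ ^ 2
        + (⟪_root_.row E i, xLS⟫ - ε i) ^ 2 / ‖_root_.row (A + E) i‖ ^ 2 :=
  kaczmarz_step_error_decomposition_general A E xLS ε i x
end

section
/- (Main theorem: RK on doubly-noisy systems, additive noise.) Let A, E ∈ ℝ^{m×n}, Ã := A + E with every row ã_i nonzero, let x_LS ∈ ℝ^n, b := A x_LS, ε ∈ ℝ^m, b̃ := b + ε, p_i := ‖ã_i‖²/‖Ã‖_F², and K_i(x) := x − ((⟨ã_i, x⟩ − b̃_i)/‖ã_i‖²) ã_i. Let σ > 0 satisfy ‖Ã z‖ ≥ σ‖z‖ for every z ∈ range(Ãᵀ). Let x_0 ∈ ℝ^n satisfy x_0 − x_LS ∈ range(Ãᵀ). Then for every k ≥ 0, Σ_{(i_1,…,i_k) ∈ {1,…,m}^k} p_{i_1}⋯p_{i_k} ‖K_{i_k}(⋯K_{i_1}(x_0)⋯)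 − x_LS‖² ≤ (1 − σ²/‖Ã‖_F²)^k ‖x_0 − x_LS‖² + ‖E x_LS − ε‖²/σ². -/
open Matrix
open scoped RealInnerProductSpace

/-! Write the right-hand side as `Ã x_LS - w` with residual `w = E x_LS - ε`, and let
`e = x - x_LS`. One Kaczmarz step with a nonzero row `ãᵢ` gives
`‖Kᵢ x - x_LS‖² = ‖e‖² + (wᵢ² - ⟪ãᵢ, e⟫²) / ‖ãᵢ‖²`, so averaging over the row weights yields at most
`‖e‖² + (‖w‖² - ‖Ã e‖²) / ‖Ã‖_F²`. Kaczmarz steps keep `e` in the row space, where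
`‖Ã e‖ ≥ σ ‖e‖`, so one step contracts the mean squared error to at most
`q ‖e‖² + ‖w‖² / ‖Ã‖_F²` with `q = 1 - σ² / ‖Ã‖_F²`. Conditioning on all but the last index, the
bound `q ^ k ‖e₀‖² + ‖w‖² / σ²` propagates by induction, because `‖w‖² / σ²` is the fixed point
of `t ↦ q t + ‖w‖² / ‖Ã‖_F²`. -/

section

variable {m n : ℕ} (M : Matrix (Fin m) (Fin n) ℝ)

lemma inner_row_eq_mulVecE (i : Fin m) (x : EuclideanSpace ℝ (Fin n)) :
    ⟪_root_.row M i, x⟫ = mulVecE M x i := by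
  simp [_root_.row, mulVecE, PiLp.inner_apply, Matrix.mulVec, dotProduct, mul_comm]

lemma add_mulVecE (N : Matrix (Fin m) (Fin n) ℝ) (x : EuclideanSpace ℝ (Fin n)) :
    mulVecE (M + N) x = mulVecE M x + mulVecE N x := by
  simp [mulVecE]

lemma frobSq_eq_sum_norm_row_sq : frobSq M = ∑ i, ‖_root_.row M i‖ ^ 2 := by
  simp [frobSq, EuclideanSpace.norm_sq_eq, _root_.row]

lemma frobSq_nonneg : 0 ≤ frobSq M := by
  unfold frobSq
  positivity

lemma row_mem_rowSpace (i : Fin m) : _root_.row M i ∈ rowSpace M := by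
  refine ⟨EuclideanSpace.single i 1, ?_⟩
  ext j
  simp [_root_.row, Matrix.mulVec, dotProduct, Pi.single_apply]

lemma norm_mulVecE_sq_le (z : EuclideanSpace ℝ (Fin n)) :
    ‖mulVecE M z‖ ^ 2 ≤ frobSq M * ‖z‖ ^ 2 := by
  rw [EuclideanSpace.norm_sq_eq, frobSq_eq_sum_norm_row_sq, Finset.sum_mul]
  gcongr with i
  rw [Real.norm_eq_abs, ← inner_row_eq_mulVecE, ← mul_pow]
  gcongr
  exact abs_real_inner_le_norm _ _

lemma sq_mul_norm_sq_le_norm_mulVecE_sq {σ : ℝ} (hσ : 0 ≤ σ)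
    (hσM : ∀ z ∈ rowSpace M, σ * ‖z‖ ≤ ‖mulVecE M z‖) {z : EuclideanSpace ℝ (Fin n)}
    (hz : z ∈ rowSpace M) : σ ^ 2 * ‖z‖ ^ 2 ≤ ‖mulVecE M z‖ ^ 2 := by
  rw [← mul_pow]
  exact pow_le_pow_left₀ (by positivity) (hσM z hz) 2

lemma sq_div_frobSq_le_one {σ : ℝ} (hσ : 0 ≤ σ)
    (hσM : ∀ z ∈ rowSpace M, σ * ‖z‖ ≤ ‖mulVecE M z‖) : σ ^ 2 / frobSq M ≤ 1 := by
  by_cases hM : frobSq M = 0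
  · simp [hM]
  refine div_le_one_of_le₀ ?_ (frobSq_nonneg M)
  obtain ⟨i, -, hi⟩ := Finset.exists_ne_zero_of_sum_ne_zero (frobSq_eq_sum_norm_row_sq M ▸ hM)
  refine le_of_mul_le_mul_right ?_ (lt_of_le_of_ne (sq_nonneg _) (Ne.symm hi))
  exact (sq_mul_norm_sq_le_norm_mulVecE_sq M hσ hσM (row_mem_rowSpace M i)).trans
    (norm_mulVecE_sq_le M _)

noncomputable def rowWeight (i : Fin m) : ℝ :=
  ‖_root_.row M i‖ ^ 2 / frobSq M

lemma rowWeight_nonneg (i : Fin m) : 0 ≤ rowWeight M i :=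
  div_nonneg (sq_nonneg _) (frobSq_nonneg M)

lemma sum_rowWeight : ∑ i, rowWeight M i = frobSq M / frobSq M := by
  simp only [rowWeight]
  rw [← Finset.sum_div, frobSq_eq_sum_norm_row_sq]

variable (c : Fin m → ℝ)

lemma kaczmarz_sub_mem_rowSpace (i : Fin m) {x y : EuclideanSpace ℝ (Fin n)}
    (hx : x - y ∈ rowSpace M) : kaczmarz M c i x - y ∈ rowSpace M := by
  rw [kaczmarz, sub_right_comm]
  exact Submodule.sub_mem _ hx (Submodule.smul_mem _ _ (row_mem_rowSpace M i))

lemma kaczmarzIter_snoc {k : ℕ} (t : Fin k → Fin m) (i : Fin m)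
    (x : EuclideanSpace ℝ (Fin n)) :
    kaczmarzIter M c (Fin.snoc t i) x = kaczmarz M c i (kaczmarzIter M c t x) := by
  rw [kaczmarzIter, List.ofFn_succ', List.concat_eq_append, List.foldl_append]
  simp [kaczmarzIter]

lemma kaczmarzIter_sub_mem_rowSpace {k : ℕ} (is : Fin k → Fin m)
    {x y : EuclideanSpace ℝ (Fin n)} (hx : x - y ∈ rowSpace M) :
    kaczmarzIter M c is x - y ∈ rowSpace M := by
  induction k with
  | zero => simpa [kaczmarzIter] using hx
  | succ k ih =>
    rw [← Fin.snoc_init_self is, kaczmarzIter_snoc]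
    exact kaczmarz_sub_mem_rowSpace M c _ (ih _)

noncomputable def expectedSqError (y x : EuclideanSpace ℝ (Fin n)) (k : ℕ) : ℝ :=
  ∑ is : Fin k → Fin m, (∏ j, rowWeight M (is j)) * ‖kaczmarzIter M c is x - y‖ ^ 2

lemma expectedSqError_zero (y x : EuclideanSpace ℝ (Fin n)) :
    expectedSqError M c y x 0 = ‖x - y‖ ^ 2 := by
  simp [expectedSqError, kaczmarzIter]

lemma expectedSqError_succ (y x : EuclideanSpace ℝ (Fin n)) (k : ℕ) :
    expectedSqError M c y x (k + 1) = ∑ t : Fin k → Fin m, (∏ j, rowWeight M (t j)) *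
      ∑ i, rowWeight M i * ‖kaczmarz M c i (kaczmarzIter M c t x) - y‖ ^ 2 := by
  rw [expectedSqError, ← (Fin.snocEquiv fun _ => Fin m).sum_comp, Fintype.sum_prod_type_right]
  refine Finset.sum_congr rfl fun t _ => ?_
  simp [Fin.snocEquiv, Fin.prod_univ_castSucc, kaczmarzIter_snoc, Finset.mul_sum, mul_assoc,
    mul_left_comm]

variable (y : EuclideanSpace ℝ (Fin n)) (w : EuclideanSpace ℝ (Fin m))

lemma kaczmarz_sub_eq (i : Fin m) (x : EuclideanSpace ℝ (Fin n)) :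
    kaczmarz M (fun j => mulVecE M y j - w j) i x - y
      = (x - y) - ((⟪_root_.row M i, x - y⟫ + w i) / ‖_root_.row M i‖ ^ 2) • _root_.row M i := by
  rw [kaczmarz, inner_sub_right, inner_row_eq_mulVecE M i y]
  ring_nf
  abel

lemma norm_kaczmarz_sub_sq {i : Fin m} (hi : _root_.row M i ≠ 0) (x : EuclideanSpace ℝ (Fin n)) :
    ‖kaczmarz M (fun j => mulVecE M y j - w j) i x - y‖ ^ 2
      = ‖x - y‖ ^ 2 + (w i ^ 2 - ⟪_root_.row M i, x - y⟫ ^ 2) / ‖_root_.row M i‖ ^ 2 := by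
  have ha : ‖_root_.row M i‖ ≠ 0 := norm_ne_zero_iff.mpr hi
  rw [kaczmarz_sub_eq, norm_sub_sq_real, real_inner_smul_right, norm_smul, mul_pow,
    Real.norm_eq_abs, sq_abs, real_inner_comm]
  field_simp
  ring

lemma rowWeight_mul_norm_kaczmarz_sub_sq_le (i : Fin m) (x : EuclideanSpace ℝ (Fin n)) :
    rowWeight M i * ‖kaczmarz M (fun j => mulVecE M y j - w j) i x - y‖ ^ 2
      ≤ rowWeight M i * ‖x - y‖ ^ 2 + (w i ^ 2 - mulVecE M (x - y) i ^ 2) / frobSq M := by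
  rw [← inner_row_eq_mulVecE]
  by_cases hi : _root_.row M i = 0
  · simp only [rowWeight, hi, norm_zero, inner_zero_left, ne_eq, OfNat.ofNat_ne_zero,
      not_false_eq_true, zero_pow, zero_div, zero_mul, sub_zero, zero_add]
    exact div_nonneg (sq_nonneg _) (frobSq_nonneg M)
  · have ha : ‖_root_.row M i‖ ≠ 0 := norm_ne_zero_iff.mpr hi
    refine le_of_eq ?_
    rw [norm_kaczmarz_sub_sq M y w hi, rowWeight]
    field_simp

lemma sum_rowWeight_mul_norm_kaczmarz_sub_sq_le (hM : frobSq M ≠ 0)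
    (x : EuclideanSpace ℝ (Fin n)) :
    ∑ i, rowWeight M i * ‖kaczmarz M (fun j => mulVecE M y j - w j) i x - y‖ ^ 2
      ≤ ‖x - y‖ ^ 2 + (‖w‖ ^ 2 - ‖mulVecE M (x - y)‖ ^ 2) / frobSq M := by
  calc _ ≤ ∑ i, (rowWeight M i * ‖x - y‖ ^ 2
            + (w i ^ 2 - mulVecE M (x - y) i ^ 2) / frobSq M) :=
        Finset.sum_le_sum fun i _ => rowWeight_mul_norm_kaczmarz_sub_sq_le M y w i x
    _ = _ := by
        rw [Finset.sum_add_distrib, ← Finset.sum_mul, sum_rowWeight, div_self hM, one_mul,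
          ← Finset.sum_div, Finset.sum_sub_distrib]
        simp [EuclideanSpace.norm_sq_eq]

lemma sum_rowWeight_mul_norm_kaczmarz_sub_sq_le_of_mem_rowSpace {σ : ℝ} (hσ : 0 ≤ σ)
    (hσM : ∀ z ∈ rowSpace M, σ * ‖z‖ ≤ ‖mulVecE M z‖) {x : EuclideanSpace ℝ (Fin n)}
    (hx : x - y ∈ rowSpace M) :
    ∑ i, rowWeight M i * ‖kaczmarz M (fun j => mulVecE M y j - w j) i x - y‖ ^ 2
      ≤ (1 - σ ^ 2 / frobSq M) * ‖x - y‖ ^ 2 + ‖w‖ ^ 2 / frobSq M := by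
  by_cases hM : frobSq M = 0
  · simp only [rowWeight, hM, div_zero, zero_mul, Finset.sum_const_zero, sub_zero, one_mul,
      add_zero]
    positivity
  have hM0 := frobSq_nonneg M
  calc _ ≤ ‖x - y‖ ^ 2 + (‖w‖ ^ 2 - ‖mulVecE M (x - y)‖ ^ 2) / frobSq M :=
        sum_rowWeight_mul_norm_kaczmarz_sub_sq_le M y w hM x
    _ ≤ ‖x - y‖ ^ 2 + (‖w‖ ^ 2 - σ ^ 2 * ‖x - y‖ ^ 2) / frobSq M := by
        gcongr
        exact sq_mul_norm_sq_le_norm_mulVecE_sq M hσ hσM hx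
    _ = _ := by
        field_simp
        ring

lemma expectedSqError_succ_le {σ : ℝ} (hσ : 0 ≤ σ)
    (hσM : ∀ z ∈ rowSpace M, σ * ‖z‖ ≤ ‖mulVecE M z‖) {x : EuclideanSpace ℝ (Fin n)}
    (hx : x - y ∈ rowSpace M) (k : ℕ) :
    expectedSqError M (fun j => mulVecE M y j - w j) y x (k + 1)
      ≤ (1 - σ ^ 2 / frobSq M) * expectedSqError M (fun j => mulVecE M y j - w j) y x k
        + ‖w‖ ^ 2 / frobSq M := by
  have hprob : ∑ t : Fin k → Fin m, ∏ j, rowWeight M (t j) ≤ 1 := by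
    rw [← Fintype.sum_pow, sum_rowWeight]
    exact pow_le_one₀ (div_nonneg (frobSq_nonneg M) (frobSq_nonneg M)) (div_self_le_one _)
  rw [expectedSqError_succ]
  calc _ ≤ ∑ t : Fin k → Fin m, (∏ j, rowWeight M (t j)) *
          ((1 - σ ^ 2 / frobSq M) * ‖kaczmarzIter M (fun j => mulVecE M y j - w j) t x - y‖ ^ 2
            + ‖w‖ ^ 2 / frobSq M) := by
        gcongr with t
        · exact Finset.prod_nonneg fun j _ => rowWeight_nonneg M (t j)
        · exact sum_rowWeight_mul_norm_kaczmarz_sub_sq_le_of_mem_rowSpace M y w hσ hσM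
            (kaczmarzIter_sub_mem_rowSpace M _ t hx)
    _ = (1 - σ ^ 2 / frobSq M) * expectedSqError M (fun j => mulVecE M y j - w j) y x k
          + ‖w‖ ^ 2 / frobSq M * ∑ t : Fin k → Fin m, ∏ j, rowWeight M (t j) := by
        simp only [expectedSqError, mul_add, Finset.sum_add_distrib, Finset.mul_sum]
        congr 1 <;> exact Finset.sum_congr rfl fun t _ => by ring
    _ ≤ _ := by
        gcongr
        exact mul_le_of_le_one_right (div_nonneg (sq_nonneg _) (frobSq_nonneg M)) hprob

lemma expectedSqError_le {σ : ℝ} (hσ : 0 < σ)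
    (hσM : ∀ z ∈ rowSpace M, σ * ‖z‖ ≤ ‖mulVecE M z‖) {x : EuclideanSpace ℝ (Fin n)}
    (hx : x - y ∈ rowSpace M) (k : ℕ) :
    expectedSqError M (fun j => mulVecE M y j - w j) y x k
      ≤ (1 - σ ^ 2 / frobSq M) ^ k * ‖x - y‖ ^ 2 + ‖w‖ ^ 2 / σ ^ 2 := by
  set q := 1 - σ ^ 2 / frobSq M
  have hq : 0 ≤ q := sub_nonneg.2 (sq_div_frobSq_le_one M hσ.le hσM)
  have hfix : q * (‖w‖ ^ 2 / σ ^ 2) + ‖w‖ ^ 2 / frobSq M = ‖w‖ ^ 2 / σ ^ 2 := by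
    have hcancel : σ ^ 2 / frobSq M * (‖w‖ ^ 2 / σ ^ 2) = ‖w‖ ^ 2 / frobSq M := by
      rw [div_mul_div_comm, mul_comm (σ ^ 2), mul_div_mul_right _ _ (pow_ne_zero 2 hσ.ne')]
    rw [sub_mul, one_mul, hcancel, sub_add_cancel]
  induction k with
  | zero =>
    rw [expectedSqError_zero, pow_zero, one_mul]
    exact le_add_of_nonneg_right (by positivity)
  | succ k ih =>
    calc _ ≤ q * expectedSqError M (fun j => mulVecE M y j - w j) y x k + ‖w‖ ^ 2 / frobSq M :=
          expectedSqError_succ_le M y w hσ.le hσM hx k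
      _ ≤ q * (q ^ k * ‖x - y‖ ^ 2 + ‖w‖ ^ 2 / σ ^ 2) + ‖w‖ ^ 2 / frobSq M := by gcongr
      _ = _ := by linear_combination hfix

end

theorem rk_doubly_noisy_additive_general {m n : ℕ}
    (A E : Matrix (Fin m) (Fin n) ℝ)
    (xLS : EuclideanSpace ℝ (Fin n)) (ε : EuclideanSpace ℝ (Fin m))
    (σ : ℝ) (hσ : 0 < σ)
    (hσA : ∀ z ∈ rowSpace (A + E), σ * ‖z‖ ≤ ‖mulVecE (A + E) z‖)
    (x0 : EuclideanSpace ℝ (Fin n)) (hx0 : x0 - xLS ∈ rowSpace (A + E))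
    (k : ℕ) :
    ∑ is : Fin k → Fin m,
        (∏ j, ‖_root_.row (A + E) (is j)‖ ^ 2 / frobSq (A + E)) *
          ‖kaczmarzIter (A + E) (fun j => mulVecE A xLS j + ε j) is x0 - xLS‖ ^ 2
      ≤ (1 - σ ^ 2 / frobSq (A + E)) ^ k * ‖x0 - xLS‖ ^ 2
        + ‖mulVecE E xLS - ε‖ ^ 2 / σ ^ 2 := by
  have hrhs : (fun j => mulVecE A xLS j + ε j)
      = fun j => mulVecE (A + E) xLS j - (mulVecE E xLS - ε) j := by
    funext j
    simp only [add_mulVecE, PiLp.add_apply, PiLp.sub_apply]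
    ring
  rw [hrhs]
  exact expectedSqError_le (A + E) xLS (mulVecE E xLS - ε) hσ hσA hx0 k

/-- Main theorem: randomized Kaczmarz on a doubly-noisy system with additive
noise, `Ãx ≈ b̃` with `Ã = A + E`, `b = A x_LS`, `b̃ = b + ε`. The left-hand side
is the expectation `E‖x_k - x_LS‖²` over the i.i.d. row choices `(i₁, …, i_k)`
sampled with probabilities `pᵢ = ‖ãᵢ‖²/‖Ã‖_F²`. -/
theorem rk_doubly_noisy_additive {m n : ℕ}
    (A E : Matrix (Fin m) (Fin n) ℝ)
    (hrow : ∀ i, _root_.row (A + E) i ≠ 0)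
    (xLS : EuclideanSpace ℝ (Fin n)) (ε : EuclideanSpace ℝ (Fin m))
    (σ : ℝ) (hσ : 0 < σ)
    (hσA : ∀ z ∈ rowSpace (A + E), σ * ‖z‖ ≤ ‖mulVecE (A + E) z‖)
    (x0 : EuclideanSpace ℝ (Fin n)) (hx0 : x0 - xLS ∈ rowSpace (A + E))
    (k : ℕ) :
    ∑ is : Fin k → Fin m,
        (∏ j, ‖_root_.row (A + E) (is j)‖ ^ 2 / frobSq (A + E)) *
          ‖kaczmarzIter (A + E) (fun j => mulVecE A xLS j + ε j) is x0 - xLS‖ ^ 2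
      ≤ (1 - σ ^ 2 / frobSq (A + E)) ^ k * ‖x0 - xLS‖ ^ 2
        + ‖mulVecE E xLS - ε‖ ^ 2 / σ ^ 2 :=
  rk_doubly_noisy_additive_general A E xLS ε σ hσ hσA x0 hx0 k
end

section
/- (Perturbation of least squares solutions.) Let A, E ∈ ℝ^{m×n} with rank(A + E) = rank(A). Let σ > 0 satisfy ‖A z‖ ≥ σ‖z‖ for every z ∈ range(Aᵀ), and assume ‖E‖ < σ, where ‖E‖ is the spectral norm. Let x_LS ∈ ℝ^n satisfy A x_LS = b and x_LS ∈ range(Aᵀ), let ε ∈ ℝ^m, and let x_NLS ∈ ℝ^n satisfy (A+E)ᵀ(A+E) x_NLS = (A+E)ᵀ(b + ε) and x_NLS ∈ range((A+E)ᵀ). Then ‖x_NLS − x_LS‖ ≤ (2 (‖E‖/σ) ‖x_LS‖ + ‖ε‖/σ) / (1 − ‖E‖/σ). -/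
open Matrix
open scoped RealInnerProductSpace

/-!
Write `B = A + E` and split `x_LS = p + q`, where `q` is the orthogonal projection of `x_LS` onto
`ker B`. Then `u = x_NLS - p` lies in the row space of `B` and solves the normal equations
`Bᵀ B u = Bᵀ (ε - E x_LS)`, so `‖B u‖ ≤ ‖ε‖ + ‖E‖ ‖x_LS‖`. On the row space of `A`, `B` is bounded
below by `σ - ‖E‖`; in particular it is injective there, so since `rank B = rank A` it maps that
row space onto `range B`. Every vector of the row space of `B` is the shortest among its
`B`-preimages, hence `B` is bounded below by `σ - ‖E‖` on its own row space too, and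
`‖u‖ ≤ (‖ε‖ + ‖E‖ ‖x_LS‖) / (σ - ‖E‖)`. For the kernel part, `A q = -E q` is small, while
`‖q‖² = ⟪q, x_LS⟫` only sees the component of `q` in the row space of `A`, on which `A` is bounded
below by `σ`; this gives `σ ‖q‖ ≤ ‖E‖ ‖x_LS‖`. Adding the bounds on `‖u‖` and `‖q‖` gives the claim.
-/

open Module LinearMap RCLike
open scoped InnerProductSpace

section InnerProductSpace

variable {𝕜 V W : Type*} [RCLike 𝕜] [NormedAddCommGroup V] [InnerProductSpace 𝕜 V]
  [NormedAddCommGroup W] [InnerProductSpace 𝕜 W]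

theorem LinearMap.norm_apply_le_of_adjoint_apply_eq [FiniteDimensional 𝕜 V]
    [FiniteDimensional 𝕜 W] (T : V →ₗ[𝕜] W) {u : V} {y : W}
    (h : T.adjoint (T u) = T.adjoint y) : ‖T u‖ ≤ ‖y‖ := by
  have hsq : ‖T u‖ ^ 2 ≤ ‖T u‖ * ‖y‖ :=
    calc ‖T u‖ ^ 2 = re ⟪T u, T u⟫_𝕜 := (inner_self_eq_norm_sq _).symm
      _ = re ⟪T u, y⟫_𝕜 := by rw [← adjoint_inner_right, h, adjoint_inner_right]
      _ ≤ ‖T u‖ * ‖y‖ := re_inner_le_norm _ _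
  nlinarith [norm_nonneg (T u), norm_nonneg y]

theorem LinearMap.norm_le_of_mem_orthogonal_ker_of_apply_eq (T : V →ₗ[𝕜] W) {z w : V}
    (hz : z ∈ (ker T)ᗮ) (h : T w = T z) : ‖z‖ ≤ ‖w‖ := by
  have hperp : ⟪z, w - z⟫_𝕜 = 0 :=
    Submodule.inner_left_of_mem_orthogonal (by simp [h]) hz
  have hpyth := norm_add_sq_eq_norm_sq_add_norm_sq_of_inner_eq_zero z (w - z) hperp
  rw [add_sub_cancel] at hpyth
  nlinarith [norm_nonneg z, norm_nonneg w, sq_nonneg ‖w - z‖]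

theorem LinearMap.mul_norm_le_norm_apply_of_mem_orthogonal_ker [FiniteDimensional 𝕜 V]
    [FiniteDimensional 𝕜 W] (T : V →ₗ[𝕜] W) (K : Submodule 𝕜 V) {c : ℝ} (hc : 0 < c)
    (hK : ∀ w ∈ K, c * ‖w‖ ≤ ‖T w‖) (hdim : finrank 𝕜 (range T) ≤ finrank 𝕜 K)
    {z : V} (hz : z ∈ (ker T)ᗮ) : c * ‖z‖ ≤ ‖T z‖ := by
  have hinj : Function.Injective (T.domRestrict K) := by
    refine (injective_iff_map_eq_zero _).2 fun ⟨w, hw⟩ hTw => ?_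
    have hTw' : T w = 0 := hTw
    have : c * ‖w‖ ≤ 0 := by simpa [hTw'] using hK w hw
    simpa using le_antisymm (nonpos_of_mul_nonpos_right this hc) (norm_nonneg w)
  have hmap : K.map T = range T := by
    refine Submodule.eq_of_le_of_finrank_le map_le_range ?_
    rwa [← range_domRestrict, finrank_range_of_inj hinj]
  obtain ⟨w, hw, hwz⟩ : T z ∈ K.map T := hmap ▸ mem_range_self T z
  calc c * ‖z‖ ≤ c * ‖w‖ := by
        gcongr; exact T.norm_le_of_mem_orthogonal_ker_of_apply_eq hz hwz
    _ ≤ ‖T w‖ := hK w hw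
    _ = ‖T z‖ := by rw [hwz]

theorem LinearMap.mul_norm_le_norm_add_apply_of_finrank_range_eq [FiniteDimensional 𝕜 V]
    [FiniteDimensional 𝕜 W] (A E : V →ₗ[𝕜] W)
    (hrank : finrank 𝕜 (range (A + E)) = finrank 𝕜 (range A)) {σ η : ℝ}
    (hA : ∀ z ∈ (ker A)ᗮ, σ * ‖z‖ ≤ ‖A z‖) (hE : ∀ x, ‖E x‖ ≤ η * ‖x‖) (hησ : η < σ)
    {z : V} (hz : z ∈ (ker (A + E))ᗮ) : (σ - η) * ‖z‖ ≤ ‖(A + E) z‖ := by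
  refine (A + E).mul_norm_le_norm_apply_of_mem_orthogonal_ker (ker A)ᗮ (sub_pos.2 hησ)
    (fun w hw => ?_) ?_ hz
  · calc (σ - η) * ‖w‖ = σ * ‖w‖ - η * ‖w‖ := sub_mul _ _ _
      _ ≤ ‖A w‖ - ‖E w‖ := sub_le_sub (hA w hw) (hE w)
      _ ≤ ‖(A + E) w‖ := norm_sub_le_norm_add _ _
  · rw [hrank, orthogonal_ker, finrank_range_adjoint]

theorem LinearMap.mul_norm_starProjection_le [FiniteDimensional 𝕜 V] (A : V →ₗ[𝕜] W)
    (K : Submodule 𝕜 V) [K.HasOrthogonalProjection] {σ η : ℝ} (hσ : 0 ≤ σ) (hη : 0 ≤ η)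
    (hA : ∀ z ∈ (ker A)ᗮ, σ * ‖z‖ ≤ ‖A z‖) {x : V} (hx : x ∈ (ker A)ᗮ)
    (hAq : ‖A (K.starProjection x)‖ ≤ η * ‖K.starProjection x‖) :
    σ * ‖K.starProjection x‖ ≤ η * ‖x‖ := by
  set q := K.starProjection x
  set r := (ker A)ᗮ.starProjection q
  have hAr : A r = A q := by
    have h := (ker A)ᗮ.sub_starProjection_mem_orthogonal q
    rw [Submodule.orthogonal_orthogonal, mem_ker, map_sub, sub_eq_zero] at h
    exact h.symm
  have hqx : ‖q‖ ^ 2 = re ⟪r, x⟫_𝕜 := by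
    have hperp : ⟪q, x - q⟫_𝕜 = 0 :=
      Submodule.inner_right_of_mem_orthogonal (K.starProjection_apply_mem x)
        (K.sub_starProjection_mem_orthogonal x)
    rw [Submodule.inner_starProjection_left_eq_right, Submodule.starProjection_eq_self_iff.2 hx,
      ← inner_self_eq_norm_sq (𝕜 := 𝕜), ← sub_add_cancel x q, inner_add_right, hperp, zero_add]
  have hr : σ * ‖r‖ ≤ η * ‖q‖ := (hA r (Submodule.starProjection_apply_mem _ q)).trans (hAr ▸ hAq)
  have hsq : σ * ‖q‖ ^ 2 ≤ η * ‖q‖ * ‖x‖ :=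
    calc σ * ‖q‖ ^ 2 = σ * re ⟪r, x⟫_𝕜 := by rw [hqx]
      _ ≤ σ * (‖r‖ * ‖x‖) := by gcongr; exact re_inner_le_norm _ _
      _ = σ * ‖r‖ * ‖x‖ := by ring
      _ ≤ η * ‖q‖ * ‖x‖ := by gcongr
  rcases (norm_nonneg q).eq_or_lt with hq | hq
  · rw [← hq, mul_zero]; positivity
  · nlinarith

theorem LinearMap.norm_sub_le_of_perturbed_normal_eq [FiniteDimensional 𝕜 V]
    [FiniteDimensional 𝕜 W] (A E : V →ₗ[𝕜] W)
    (hrank : finrank 𝕜 (range (A + E)) = finrank 𝕜 (range A)) {σ η : ℝ}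
    (hA : ∀ z ∈ (ker A)ᗮ, σ * ‖z‖ ≤ ‖A z‖) (hE : ∀ x, ‖E x‖ ≤ η * ‖x‖) (hη : 0 ≤ η)
    (hησ : η < σ) {x y : V} (ε : W) (hx : x ∈ (ker A)ᗮ) (hy : y ∈ (ker (A + E))ᗮ)
    (hnormal : (A + E).adjoint ((A + E) y) = (A + E).adjoint (A x + ε)) :
    ‖y - x‖ ≤ (‖ε‖ + 2 * η * ‖x‖) / (σ - η) := by
  set B := A + E
  set q := (ker B).starProjection x
  set u := y - (x - q)
  have hBq : B q = 0 := (ker B).starProjection_apply_mem x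
  have hu : u ∈ (ker B)ᗮ := Submodule.sub_mem _ hy ((ker B).sub_starProjection_mem_orthogonal x)
  have hBu : B.adjoint (B u) = B.adjoint (ε - E x) := by
    have : B u = B y - (A x + E x) := by simp only [u, map_sub, hBq, sub_zero, B, add_apply]
    rw [this, map_sub, hnormal, ← map_sub]
    congr 1
    abel
  have hBu_le : ‖B u‖ ≤ ‖ε‖ + η * ‖x‖ :=
    (B.norm_apply_le_of_adjoint_apply_eq hBu).trans ((norm_sub_le _ _).trans (by grw [hE x]))
  have hu_le : (σ - η) * ‖u‖ ≤ ‖ε‖ + η * ‖x‖ :=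
    (A.mul_norm_le_norm_add_apply_of_finrank_range_eq E hrank hA hE hησ hu).trans hBu_le
  have hAq : A q = -E q := eq_neg_of_add_eq_zero_left hBq
  have hq_le : σ * ‖q‖ ≤ η * ‖x‖ :=
    A.mul_norm_starProjection_le (ker B) (hη.trans hησ.le) hη hA hx
      (by rw [hAq, norm_neg]; exact hE q)
  have hgap : 0 < σ - η := sub_pos.2 hησ
  rw [le_div_iff₀' hgap]
  calc (σ - η) * ‖y - x‖ = (σ - η) * ‖u - q‖ := by congr 2; simp only [u]; abel
    _ ≤ (σ - η) * (‖u‖ + ‖q‖) := by gcongr; exact norm_sub_le u q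
    _ ≤ ‖ε‖ + 2 * η * ‖x‖ := by nlinarith [mul_nonneg hη (norm_nonneg q)]

end InnerProductSpace

section Matrix

variable {m n : ℕ}

lemma specNorm_nonneg (M : Matrix (Fin m) (Fin n) ℝ) : 0 ≤ specNorm M :=
  norm_nonneg _

lemma norm_mulVecE_le (M : Matrix (Fin m) (Fin n) ℝ) (x : EuclideanSpace ℝ (Fin n)) :
    ‖mulVecE M x‖ ≤ specNorm M * ‖x‖ :=
  (toEuclideanLin M).toContinuousLinearMap.le_opNorm x

lemma rowSpace_eq_orthogonal_ker (M : Matrix (Fin m) (Fin n) ℝ) :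
    rowSpace M = (ker (toEuclideanLin M))ᗮ := by
  rw [rowSpace, orthogonal_ker, ← toEuclideanLin_conjTranspose_eq_adjoint,
    conjTranspose_eq_transpose_of_trivial]

lemma rank_eq_finrank_range_toEuclideanLin (M : Matrix (Fin m) (Fin n) ℝ) :
    M.rank = finrank ℝ (range (toEuclideanLin M)) := by
  rw [toEuclideanLin, toLpLin_eq_toLin]
  exact M.rank_eq_finrank_range_toLin _ _

lemma mulVecE_transpose (M : Matrix (Fin m) (Fin n) ℝ) (y : EuclideanSpace ℝ (Fin m)) :
    mulVecE Mᵀ y = (toEuclideanLin M).adjoint y := by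
  rw [mulVecE, ← conjTranspose_eq_transpose_of_trivial, toEuclideanLin_conjTranspose_eq_adjoint]

lemma mulVecE_mul {p : ℕ} (M : Matrix (Fin m) (Fin n) ℝ) (N : Matrix (Fin n) (Fin p) ℝ)
    (x : EuclideanSpace ℝ (Fin p)) : mulVecE (M * N) x = mulVecE M (mulVecE N x) := by
  simp [mulVecE]

end Matrix

theorem ls_perturbation_general {m n : ℕ}
    (A E : Matrix (Fin m) (Fin n) ℝ)
    (hrank : (A + E).rank = A.rank)
    (σ : ℝ)
    (hσA : ∀ z ∈ rowSpace A, σ * ‖z‖ ≤ ‖mulVecE A z‖)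
    (hE : specNorm E < σ)
    (xLS : EuclideanSpace ℝ (Fin n)) (hxLS : xLS ∈ rowSpace A)
    (ε : EuclideanSpace ℝ (Fin m))
    (xNLS : EuclideanSpace ℝ (Fin n))
    (hNLS : mulVecE ((A + E)ᵀ * (A + E)) xNLS = mulVecE (A + E)ᵀ (mulVecE A xLS + ε))
    (hxNLS : xNLS ∈ rowSpace (A + E)) :
    ‖xNLS - xLS‖
      ≤ (2 * (specNorm E / σ) * ‖xLS‖ + ‖ε‖ / σ) / (1 - specNorm E / σ) := by
  have hη := specNorm_nonneg E
  have hσ : 0 < σ := hη.trans_lt hE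
  have hsum : toEuclideanLin (A + E) = toEuclideanLin A + toEuclideanLin E := map_add _ _ _
  rw [rank_eq_finrank_range_toEuclideanLin, rank_eq_finrank_range_toEuclideanLin, hsum] at hrank
  rw [rowSpace_eq_orthogonal_ker] at hσA hxLS hxNLS
  rw [hsum] at hxNLS
  rw [mulVecE_mul, mulVecE_transpose, mulVecE_transpose] at hNLS
  simp only [mulVecE, hsum] at hNLS
  have key := (toEuclideanLin A).norm_sub_le_of_perturbed_normal_eq (toEuclideanLin E) hrank
    hσA (norm_mulVecE_le E) hη hE ε hxLS hxNLS hNLS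
  calc ‖xNLS - xLS‖ ≤ (‖ε‖ + 2 * specNorm E * ‖xLS‖) / (σ - specNorm E) := key
    _ = _ := by field_simp; ring

/-- Perturbation of least squares solutions: if `rank(A + E) = rank(A)`,
`‖E‖ < σ` where `σ > 0` lower-bounds `A` on its row space (e.g. `σ = σ_min(A)`),
`x_LS = A†b` is the minimum-norm solution of the consistent system `A x = b`,
and `x_NLS = (A+E)†(b+ε)` (characterized by the normal equations together with
membership in `range((A+E)ᵀ)`), then
`‖x_NLS - x_LS‖ ≤ (2(‖E‖/σ)‖x_LS‖ + ‖ε‖/σ)/(1 - ‖E‖/σ)`. -/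
theorem ls_perturbation {m n : ℕ}
    (A E : Matrix (Fin m) (Fin n) ℝ)
    (hrank : (A + E).rank = A.rank)
    (σ : ℝ) (hσ : 0 < σ)
    (hσA : ∀ z ∈ rowSpace A, σ * ‖z‖ ≤ ‖mulVecE A z‖)
    (hE : specNorm E < σ)
    (xLS : EuclideanSpace ℝ (Fin n)) (hxLS : xLS ∈ rowSpace A)
    (ε : EuclideanSpace ℝ (Fin m))
    (xNLS : EuclideanSpace ℝ (Fin n))
    (hNLS : mulVecE ((A + E)ᵀ * (A + E)) xNLS = mulVecE (A + E)ᵀ (mulVecE A xLS + ε))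
    (hxNLS : xNLS ∈ rowSpace (A + E)) :
    ‖xNLS - xLS‖
      ≤ (2 * (specNorm E / σ) * ‖xLS‖ + ‖ε‖ / σ) / (1 - specNorm E / σ) :=
  ls_perturbation_general A E hrank σ hσA hE xLS hxLS ε xNLS hNLS hxNLS
end
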